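/- The semantics of the MatchKAT increment program is correct: for bit range [i…j] holding a binary number (bit i most significant), the term [i…j]⁺⁺ defined by [i…j]⁺⁺ = ⊤ if j < i, and otherwise (j≃0 · j←1) + (j≃1 · j←0 · [i…j−1]⁺⁺), maps each packet π to the packet whose [i…j] field value is (v+1) mod 2^{j−i+1} where v is the value of π's bits i through j, leaving all other bits unchanged. -/

import Mathlib

/-- Packets: binary strings of length `n`. -/
abbrev Pk (n : ℕ) := List.Vector Bool n

/-- The `p`-th bit of a packet. -/
def getBit {n : ℕ} (π : Pk n) (p : ℕ) : Bool := π.toList.getD p false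

/-- The packet `π[p ← k]`. -/
def setBit {n : ℕ} (π : Pk n) (p : ℕ) (k : Bool) : Pk n :=
  ⟨π.1.set p k, by rw [List.length_set]; exact π.2⟩

/-- MatchKAT terms of packet size `n`: `eq p k` is the single-bit test
`p ≃ k` (the match expression `⊤_{p-1} k ⊤_{n-p}`), `assign p k` is `p ← k`. -/
inductive MK (n : ℕ) : Type
  | bot : MK n
  | top : MK n
  | eq (p : ℕ) (k : Bool) : MK n
  | assign (p : ℕ) (k : Bool) : MK n
  | plus (a b : MK n) : MK n
  | seq (a b : MK n) : MK n
  | star (a : MK n) : MK n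
  | compl (a : MK n) : MK n

/-- Packet filtering semantics of MatchKAT. -/
def mksem {n : ℕ} : MK n → Set (Pk n) → Set (Pk n)
  | .bot, _ => ∅
  | .top, P => P
  | .eq p k, P => {π ∈ P | getBit π p = k}
  | .assign p k, P => (fun π => setBit π p k) '' P
  | .plus a b, P => mksem a P ∪ mksem b P
  | .seq a b, P => mksem b (mksem a P)
  | .star a, P => ⋃ m : ℕ, (mksem a)^[m] P
  | .compl a, P => Set.univ \ mksem a P

/-- `v` as the value of a bit list, most significant bit first. -/
def bitsToNat (l : List Bool) : ℕ := l.foldl (fun a b => 2 * a + b.toNat) 0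

/-- The `w`-bit binary representation of `v`, most significant bit first. -/
def natToBits (w v : ℕ) : List Bool := (List.range w).map fun t => v.testBit (w - 1 - t)

/-- The increment program on the `w` bits starting at position `i`
(so `[i…j]⁺⁺ = incW i (j+1-i)`):
`incW i 0 = ⊤` and otherwise, with `j = i + w` the least significant bit,
`(j≃0 · j←1) + (j≃1 · j←0 · [i…j−1]⁺⁺)`. -/
def incW {n : ℕ} (i : ℕ) : ℕ → MK n
  | 0 => .top
  | w + 1 =>
      .plus (.seq (.eq (i + w) false) (.assign (i + w) true))
            (.seq (.eq (i + w) true) (.seq (.assign (i + w) false) (incW i w)))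

/-! On a single packet the program is deterministic: it tests the least significant bit `j`;
a `0` becomes `1` and the program stops, a `1` becomes `0` and the carry goes into `[i…j-1]`.
This is the recursion `inc (m ++ [0]) = m ++ [1]`, `inc (m ++ [1]) = inc m ++ [0]` of the
increment of an MSB-first bit string, so induction on the width of the field, with the packet
split as prefix ++ field ++ suffix, gives the result. -/

def incBits (m : List Bool) : List Bool :=
  natToBits m.length ((bitsToNat m + 1) % 2 ^ m.length)

lemma bitsToNat_append_singleton (l : List Bool) (b : Bool) :
    bitsToNat (l ++ [b]) = 2 * bitsToNat l + b.toNat := by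
  simp [bitsToNat, List.foldl_append]

lemma bitsToNat_lt (l : List Bool) : bitsToNat l < 2 ^ l.length := by
  induction l using List.reverseRecOn with
  | nil => simp [bitsToNat]
  | append_singleton l b ih =>
    rw [bitsToNat_append_singleton, List.length_append, List.length_singleton, pow_succ]
    have := Bool.toNat_le b
    omega

lemma natToBits_succ_two_mul_add (w u : ℕ) (b : Bool) :
    natToBits (w + 1) (2 * u + b.toNat) = natToBits w u ++ [b] := by
  simp only [natToBits, List.range_succ, List.map_append, List.map_cons, List.map_nil,
    Nat.add_sub_cancel, Nat.sub_self]
  congr 1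
  · refine List.map_congr_left fun t ht => ?_
    rw [List.mem_range] at ht
    rw [show w - t = (w - 1 - t) + 1 by omega, Nat.testBit_succ]
    cases b <;> simp [Nat.mul_add_div]
  · cases b <;> simp [Nat.testBit_zero]

lemma natToBits_bitsToNat (l : List Bool) : natToBits l.length (bitsToNat l) = l := by
  induction l using List.reverseRecOn with
  | nil => simp [natToBits]
  | append_singleton l b ih =>
    rw [bitsToNat_append_singleton, List.length_append, List.length_singleton,
      natToBits_succ_two_mul_add, ih]

lemma incBits_nil : incBits [] = [] := by
  simp [incBits, natToBits]

lemma incBits_append_false (m : List Bool) : incBits (m ++ [false]) = m ++ [true] := by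
  have hno_wrap : 2 * bitsToNat m + 1 < 2 ^ (m.length + 1) := by
    have := bitsToNat_lt m
    rw [pow_succ]; omega
  rw [incBits, bitsToNat_append_singleton, List.length_append, List.length_singleton,
    Bool.toNat_false, Nat.add_zero, Nat.mod_eq_of_lt hno_wrap]
  exact (natToBits_succ_two_mul_add _ _ true).trans (by rw [natToBits_bitsToNat])

lemma incBits_append_true (m : List Bool) : incBits (m ++ [true]) = incBits m ++ [false] := by
  have hcarry : (2 * bitsToNat m + 1 + 1) % 2 ^ (m.length + 1) =
      2 * ((bitsToNat m + 1) % 2 ^ m.length) + false.toNat := by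
    rw [pow_succ', ← Nat.mul_mod_mul_left, Bool.toNat_false, Nat.add_zero]
    ring_nf
  rw [incBits, incBits, bitsToNat_append_singleton, List.length_append, List.length_singleton,
    Bool.toNat_true, hcarry, natToBits_succ_two_mul_add]

section Packets

variable {n : ℕ}

lemma setOf_toList_eq_singleton (π : Pk n) : {π' : Pk n | π'.toList = π.toList} = {π} :=
  Set.ext fun _ => List.Vector.toList_injective.eq_iff

lemma getBit_length_of_toList_eq {π : Pk n} {B C : List Bool} {b : Bool}
    (h : π.toList = B ++ b :: C) : getBit π B.length = b := by
  simp [getBit, h]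

lemma toList_setBit_length_of_toList_eq {π : Pk n} {B C : List Bool} {b : Bool}
    (h : π.toList = B ++ b :: C) (k : Bool) : (setBit π B.length k).toList = B ++ k :: C := by
  change π.toList.set B.length k = _
  simp [h]

lemma mksem_incW_empty (i w : ℕ) : mksem (incW i w : MK n) ∅ = ∅ := by
  induction w with
  | zero => rfl
  | succ w ih => simp [incW, mksem, ih]

lemma mksem_eq_singleton (p : ℕ) (k : Bool) (π : Pk n) :
    mksem (.eq p k) {π} = if getBit π p = k then {π} else ∅ := by
  ext x
  simp only [mksem, Set.mem_ofPred_eq, Set.mem_singleton_iff]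
  split_ifs with h
  · simp only [Set.mem_singleton_iff, and_iff_left_iff_imp]; rintro rfl; exact h
  · simp only [Set.mem_empty_iff_false, iff_false, not_and]; rintro rfl; exact h

lemma mksem_incW_succ_singleton (i w : ℕ) (π : Pk n) :
    mksem (incW i (w + 1)) {π} =
      if getBit π (i + w) then mksem (incW i w) {setBit π (i + w) false}
      else {setBit π (i + w) true} := by
  change mksem (.assign _ true) (mksem (.eq _ false) {π}) ∪
    mksem (incW i w) (mksem (.assign _ false) (mksem (.eq _ true) {π})) = _
  rw [mksem_eq_singleton, mksem_eq_singleton]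
  cases getBit π (i + w) <;> simp [mksem, mksem_incW_empty]

theorem mksem_incW_singleton (A m C : List Bool) (π : Pk n) (h : π.toList = A ++ m ++ C) :
    mksem (incW A.length m.length) {π} = {π' | π'.toList = A ++ incBits m ++ C} := by
  induction m using List.reverseRecOn generalizing π C with
  | nil =>
    rw [List.append_nil] at h
    rw [incBits_nil, List.append_nil, ← h, setOf_toList_eq_singleton]
    rfl
  | append_singleton m b ih =>
    have hπ : π.toList = (A ++ m) ++ b :: C := by simpa using h
    rw [List.length_append, List.length_singleton, mksem_incW_succ_singleton,
      ← List.length_append, getBit_length_of_toList_eq hπ]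
    cases b
    · rw [incBits_append_false, if_neg Bool.false_ne_true, ← setOf_toList_eq_singleton,
        toList_setBit_length_of_toList_eq hπ]
      simp
    · have hπ₂ := toList_setBit_length_of_toList_eq hπ false
      rw [if_pos rfl, ih (false :: C) _ (by simpa using hπ₂), incBits_append_true]
      simp

end Packets

/-- Correctness of the MatchKAT increment program: `[i…j]⁺⁺` maps a packet `π`
to the unique packet whose bits `i` through `j` hold `(v+1) mod 2^(j−i+1)`,
where `v` is the value of `π`'s bits `i` through `j` (bit `i` most
significant), all other bits unchanged. (Bit positions are 0-based.) -/
theorem incW_correct {n : ℕ} (i j : ℕ) (hij : i ≤ j) (hj : j < n) (π : Pk n) :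
    mksem (incW i (j + 1 - i)) {π} =
      {π' : Pk n | π'.toList =
        π.toList.take i ++
          natToBits (j + 1 - i)
            ((bitsToNat ((π.toList.drop i).take (j + 1 - i)) + 1) % 2 ^ (j + 1 - i)) ++
          π.toList.drop (j + 1)} := by
  set l := π.toList
  have hlen : l.length = n := π.toList_length
  have hprefix : (l.take i).length = i := by simp only [List.length_take, hlen]; omega
  have hfield : ((l.drop i).take (j + 1 - i)).length = j + 1 - i := by
    simp only [List.length_take, List.length_drop, hlen]; omega
  have hsplit : l = l.take i ++ (l.drop i).take (j + 1 - i) ++ l.drop (j + 1) := by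
    conv_lhs => rw [← List.take_append_drop i l, ← List.take_append_drop (j + 1 - i) (l.drop i)]
    rw [List.drop_drop, List.append_assoc, show i + (j + 1 - i) = j + 1 by omega]
  have hsem := mksem_incW_singleton _ _ _ π hsplit
  rw [hprefix, hfield] at hsem
  rw [hsem, incBits, hfield]
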